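/- Let G be a finite group, x ∈ G, and π an automorphism of the directed reduced power graph →RP(G). If the ≃-class x̂ is of Type II, then the ≃-class of x^π is also of Type II and o(x^π) = o(x). -/

import Mathlib

/-!
Since `π` preserves strict inclusion of cyclic subgroups, it preserves maximality, the relation
`≃`, and out-neighbourhoods `N(a) = {c | ⟨c⟩ < ⟨a⟩}` up to taking images. Two maximal elements
`y ≃ z` with `⟨y⟩ ≠ ⟨z⟩` have `N(y) = N(z) = ⟨y⟩ ∩ ⟨z⟩`, a subgroup; and a cyclic group whose
proper part is a subgroup has prime power order `p ^ (i + 1)`, the proper part having `p ^ i`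
elements. So once the class of `x^π` is seen to contain two `∼`-classes, `|N(x)| = |N(x^π)|`
gives `o(x^π) = o(x)` (when `N(x) = {1}`, even `x ≃ x^π`). Were the class of `x^π` a single
`∼`-class, counting generators would give `o(x^π) > o(x)`, while the chain `N(x) = ⟨x ^ p⟩`,
transported by `π`, bounds `o(x^π) ≤ o(x)`.
-/

open Subgroup Set

variable (G : Type*) [Group G]

/-- Arc of the directed reduced power graph `→RP(G)`: from `x` to `y` iff `⟨y⟩ ⊊ ⟨x⟩`. -/
def rpArc (x y : G) : Prop := zpowers y < zpowers x

/-- Adjacency in the undirected reduced power graph `RP(G)`: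
`x` and `y` are adjacent iff `⟨x⟩ ⊊ ⟨y⟩` or `⟨y⟩ ⊊ ⟨x⟩`. -/
def rpAdj (x y : G) : Prop := zpowers x < zpowers y ∨ zpowers y < zpowers x

/-- `x ≃ y` iff `x` and `y` have the same neighbourhood in `RP(G)`. -/
def simEq (x y : G) : Prop := ∀ z : G, rpAdj G x z ↔ rpAdj G y z

/-- The `≃`-class `x̂` of `x`. -/
def hatCls (x : G) : Set G := {y | simEq G y x}

/-- The `∼`-class `[x]` of `x`: the set of generators of `⟨x⟩`. -/
def genCls (x : G) : Set G := {y | zpowers y = zpowers x}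

/-- The automorphism group of the directed reduced power graph `→RP(G)`,
as a subgroup of the permutations of `G`. -/
def DRPAut : Subgroup (Equiv.Perm G) where
  carrier := {π | ∀ x y : G, rpArc G (π x) (π y) ↔ rpArc G x y}
  one_mem' := fun _ _ => Iff.rfl
  mul_mem' := by
    intro a b ha hb x y
    simp only [Equiv.Perm.mul_apply]
    exact (ha (b x) (b y)).trans (hb x y)
  inv_mem' := by
    intro a ha x y
    have h := ha (a⁻¹ x) (a⁻¹ y)
    simp only [← Equiv.Perm.mul_apply, mul_inv_cancel, Equiv.Perm.one_apply] at h
    exact h.symm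

/-- The automorphism group of the undirected reduced power graph `RP(G)`,
as a subgroup of the permutations of `G`. -/
def RPAut : Subgroup (Equiv.Perm G) where
  carrier := {π | ∀ x y : G, rpAdj G (π x) (π y) ↔ rpAdj G x y}
  one_mem' := fun _ _ => Iff.rfl
  mul_mem' := by
    intro a b ha hb x y
    simp only [Equiv.Perm.mul_apply]
    exact (ha (b x) (b y)).trans (hb x y)
  inv_mem' := by
    intro a ha x y
    have h := ha (a⁻¹ x) (a⁻¹ y)
    simp only [← Equiv.Perm.mul_apply, mul_inv_cancel, Equiv.Perm.one_apply] at h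
    exact h.symm

/-- `⟨x⟩` is a maximal cyclic subgroup of `G`. -/
def IsMaxCyc (x : G) : Prop := ∀ y : G, zpowers x ≤ zpowers y → zpowers x = zpowers y

/-- The `≃`-class of `x` is of Type I: it is a single `∼`-class, `x̂ = [x]`. -/
def TypeI (x : G) : Prop := hatCls G x = genCls G x

/-- The `≃`-class of `x` is of Type II: it is a union of `r ≥ 2` `∼`-classes whose
cyclic subgroups are distinct maximal cyclic subgroups of `G`, all of the same order. -/
def TypeII (x : G) : Prop :=
  (∃ y z : G, simEq G y x ∧ simEq G z x ∧ zpowers y ≠ zpowers z) ∧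
  ∀ y : G, simEq G y x → IsMaxCyc G y ∧ orderOf y = orderOf x

/-- The `≃`-class of `x` is of Type III: `G` is non-cyclic, the class is a union of
`r ≥ 2` `∼`-classes whose cyclic subgroups are maximal cyclic subgroups of prime order,
and at least two distinct orders occur. -/
def TypeIII (x : G) : Prop :=
  ¬ IsCyclic G ∧
  (∃ y z : G, simEq G y x ∧ simEq G z x ∧ orderOf y ≠ orderOf z) ∧
  ∀ y : G, simEq G y x → IsMaxCyc G y ∧ (orderOf y).Prime

/-- The `≃`-class of `x` is of Type IV with parameter `(p, q)`: it is a union of exactly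
two `∼`-classes of elements of distinct prime orders `p` and `q`, the corresponding cyclic
subgroups being non-maximal when `G` is non-cyclic, and maximal when `G` is cyclic. -/
def TypeIV (x : G) (p q : ℕ) : Prop :=
  p.Prime ∧ q.Prime ∧ p ≠ q ∧
  (∃ x₁ x₂ : G, simEq G x₁ x ∧ simEq G x₂ x ∧ orderOf x₁ = p ∧ orderOf x₂ = q ∧
     ∀ y : G, simEq G y x → zpowers y = zpowers x₁ ∨ zpowers y = zpowers x₂) ∧
  ((¬ IsCyclic G ∧ ∀ y : G, simEq G y x → ¬ IsMaxCyc G y) ∨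
   (IsCyclic G ∧ ∀ y : G, simEq G y x → IsMaxCyc G y))

/-- A `P(G)`-permutation: a permutation `σ` of `G` preserving element orders, mapping each
`∼`-class `[x]` onto `[x^σ]`, and preserving inclusion and non-inclusion of cyclic subgroups. -/
def IsPPerm (σ : Equiv.Perm G) : Prop :=
  (∀ x : G, orderOf (σ x) = orderOf x) ∧
  (∀ x : G, σ '' genCls G x = genCls G (σ x)) ∧
  (∀ x y : G, zpowers y ≤ zpowers x ↔ zpowers (σ y) ≤ zpowers (σ x))

/-- A permutation of `G` fixing every `≃`-class setwise. -/
def FixesClasses (τ : Equiv.Perm G) : Prop := ∀ x : G, simEq G (τ x) x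


variable {G}

def outNbrs (a : G) : Set G := {c | zpowers c < zpowers a}

section Graph

variable {a b c x y z : G}

lemma outNbrs_eq_empty_iff : outNbrs a = ∅ ↔ a = 1 := by
  refine ⟨fun h => by_contra fun ha => ?_, fun h => ?_⟩
  · have h1 : (1 : G) ∈ outNbrs a := by
      simpa [outNbrs, bot_lt_iff_ne_bot, zpowers_eq_bot] using ha
    simp [h] at h1
  · ext c
    simp [outNbrs, h]

lemma outNbrs_congr (h : zpowers a = zpowers b) : outNbrs a = outNbrs b := by
  simp only [outNbrs, h]

lemma simEq_refl (a : G) : simEq G a a := fun _ => Iff.rfl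

lemma simEq.symm (h : simEq G a b) : simEq G b a := fun c => (h c).symm

lemma simEq.trans (h₁ : simEq G a b) (h₂ : simEq G b c) : simEq G a c :=
  fun d => (h₁ d).trans (h₂ d)

lemma simEq_of_zpowers_eq (h : zpowers a = zpowers b) : simEq G a b := by
  intro c
  simp only [rpAdj, h]

lemma isMaxCyc_iff : IsMaxCyc G a ↔ ∀ c, ¬ zpowers a < zpowers c :=
  ⟨fun h c hc => hc.ne (h c hc.le), fun h c hle => hle.eq_of_not_lt (h c)⟩

lemma rpAdj_iff_mem_outNbrs (ha : IsMaxCyc G a) : rpAdj G a c ↔ c ∈ outNbrs a :=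
  or_iff_right (isMaxCyc_iff.1 ha c)

lemma simEq_iff_outNbrs_eq (ha : IsMaxCyc G a) (hb : IsMaxCyc G b) :
    simEq G a b ↔ outNbrs a = outNbrs b := by
  simp only [simEq, rpAdj_iff_mem_outNbrs ha, rpAdj_iff_mem_outNbrs hb, Set.ext_iff]

lemma coe_zpowers_inf_eq_outNbrs (h : outNbrs a = outNbrs b) (hne : zpowers a ≠ zpowers b) :
    ((zpowers a ⊓ zpowers b : Subgroup G) : Set G) = outNbrs a := by
  have hab : ¬ zpowers a ≤ zpowers b := fun hle =>
    lt_irrefl (zpowers a) (show a ∈ outNbrs a by rw [h]; exact lt_of_le_of_ne hle hne)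
  ext c
  simp only [coe_inf, Set.mem_inter_iff, SetLike.mem_coe, ← zpowers_le]
  refine ⟨fun ⟨hca, hcb⟩ => lt_of_le_of_ne hca fun hc => hab (hc ▸ hcb), fun hc => ?_⟩
  exact ⟨(show zpowers c < zpowers a from hc).le, (show c ∈ outNbrs b from h ▸ hc).le⟩

lemma exists_coe_eq_outNbrs_of_simEq (hmax : ∀ v, simEq G v x → IsMaxCyc G v)
    (h : ∃ y z, simEq G y x ∧ simEq G z x ∧ zpowers y ≠ zpowers z) :
    ∃ H : Subgroup G, (H : Set G) = outNbrs x := by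
  obtain ⟨y, z, hy, hz, hyz⟩ := h
  have hx := hmax x (simEq_refl x)
  have hyx := (simEq_iff_outNbrs_eq (hmax y hy) hx).1 hy
  have hzx := (simEq_iff_outNbrs_eq (hmax z hz) hx).1 hz
  exact ⟨_, hyx ▸ coe_zpowers_inf_eq_outNbrs (hyx.trans hzx.symm) hyz⟩

lemma TypeII.of_simEq (hT : TypeII G x) (h : simEq G y x) : TypeII G y := by
  obtain ⟨⟨a, b, ha, hb, hab⟩, hmax⟩ := hT
  refine ⟨⟨a, b, ha.trans h.symm, hb.trans h.symm, hab⟩, fun c hc => ?_⟩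
  obtain ⟨hc, hcx⟩ := hmax c (hc.trans h)
  exact ⟨hc, hcx.trans (hmax y h).2.symm⟩

end Graph

namespace DRPAut

variable {π : Equiv.Perm G} (hπ : π ∈ DRPAut G)
include hπ

lemma zpowers_lt_iff (a b : G) : zpowers (π a) < zpowers (π b) ↔ zpowers a < zpowers b :=
  hπ b a

lemma rpAdj_apply_iff (a b : G) : rpAdj G (π a) (π b) ↔ rpAdj G a b :=
  or_congr (hπ b a) (hπ a b)

lemma outNbrs_apply (a : G) : outNbrs (π a) = π '' outNbrs a := by
  ext c
  obtain ⟨c, rfl⟩ := π.surjective c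
  simp only [outNbrs, Set.mem_ofPred_eq, π.injective.mem_set_image, zpowers_lt_iff hπ]

lemma ncard_outNbrs_apply (a : G) : (outNbrs (π a)).ncard = (outNbrs a).ncard := by
  rw [outNbrs_apply hπ, Set.ncard_image_of_injective _ π.injective]

lemma apply_one : π 1 = 1 := by
  rw [← outNbrs_eq_empty_iff, outNbrs_apply hπ, outNbrs_eq_empty_iff.2 rfl, Set.image_empty]

lemma isMaxCyc_apply_iff (a : G) : IsMaxCyc G (π a) ↔ IsMaxCyc G a := by
  simp only [isMaxCyc_iff, ← π.forall_congr_right (q := fun c => ¬ zpowers (π a) < zpowers c),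
    zpowers_lt_iff hπ]

lemma simEq_apply_iff (a b : G) : simEq G (π a) (π b) ↔ simEq G a b := by
  simp only [simEq, ← π.forall_congr_right (q := fun c => rpAdj G (π a) c ↔ rpAdj G (π b) c),
    rpAdj_apply_iff hπ]

lemma simEq_apply_of_outNbrs_eq_one {x : G} (hx : IsMaxCyc G x) (h : outNbrs x = {1}) :
    simEq G (π x) x :=
  (simEq_iff_outNbrs_eq ((isMaxCyc_apply_iff hπ x).2 hx) hx).2
    (by rw [outNbrs_apply hπ, h, Set.image_singleton, apply_one hπ])

end DRPAut

lemma TypeII.isMaxCyc_of_simEq_apply {π : Equiv.Perm G} (hπ : π ∈ DRPAut G) {x v : G}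
    (hT : TypeII G x) (hv : simEq G v (π x)) : IsMaxCyc G v := by
  obtain ⟨u, rfl⟩ := π.surjective v
  exact (DRPAut.isMaxCyc_apply_iff hπ u).2 (hT.2 u ((DRPAut.simEq_apply_iff hπ u x).1 hv)).1

lemma ncard_coe_zpowers (a : G) : (zpowers a : Set G).ncard = orderOf a := by
  rw [← Nat.card_coe_set_eq, SetLike.coe_sort_coe, Nat.card_zpowers]

section Finite

variable [Finite G] {a b w : G}

lemma zpowers_eq_zpowers_pow_div (ha : a ∈ zpowers w) :
    zpowers a = zpowers (w ^ (orderOf w / orderOf a)) := by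
  have hdvd : orderOf a ∣ orderOf w := orderOf_dvd_of_mem_zpowers ha
  have hord : orderOf (w ^ (orderOf w / orderOf a)) = orderOf a :=
    orderOf_pow_orderOf_div (orderOf_pos w).ne' hdvd
  obtain ⟨i, rfl⟩ := mem_zpowers_iff.1 ha
  obtain ⟨t, ht⟩ := hdvd
  have ht0 : orderOf (w ^ i) ≠ 0 := (orderOf_pos _).ne'
  have hdiv : orderOf w / orderOf (w ^ i) = t := by
    rw [ht, Nat.mul_div_cancel_left _ (Nat.pos_of_ne_zero ht0)]
  have hti : (t : ℤ) ∣ i := by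
    have h : ((orderOf (w ^ i) * t : ℕ) : ℤ) ∣ i * orderOf (w ^ i) := by
      rw [← ht, orderOf_dvd_iff_zpow_eq_one, zpow_mul, zpow_natCast, pow_orderOf_eq_one]
    rw [mul_comm i, Nat.cast_mul] at h
    exact (mul_dvd_mul_iff_left (by exact_mod_cast ht0)).1 h
  obtain ⟨s, rfl⟩ := hti
  refine eq_of_le_of_card_ge ?_ ?_
  · rw [hdiv, zpowers_le, zpow_mul, zpow_natCast]
    exact zpow_mem_zpowers _ s
  · rw [Nat.card_zpowers, Nat.card_zpowers, hord]

lemma zpowers_eq_of_orderOf_eq (ha : a ∈ zpowers w) (hb : b ∈ zpowers w)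
    (h : orderOf a = orderOf b) : zpowers a = zpowers b := by
  rw [zpowers_eq_zpowers_pow_div ha, zpowers_eq_zpowers_pow_div hb, h]

lemma orderOf_eq_ncard_outNbrs_add_ncard_genCls (a : G) :
    orderOf a = (outNbrs a).ncard + (genCls G a).ncard := by
  have hunion : (zpowers a : Set G) = outNbrs a ∪ genCls G a := by
    ext c
    simp only [Set.mem_union, SetLike.mem_coe, ← zpowers_le, outNbrs, genCls,
      Set.mem_ofPred_eq, le_iff_lt_or_eq]
  have hdisj : Disjoint (outNbrs a) (genCls G a) :=
    Set.disjoint_left.2 fun c hlt heq => (show zpowers c < zpowers a from hlt).ne heq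
  rw [← ncard_coe_zpowers, hunion, Set.ncard_union_eq hdisj]

lemma card_le_ncard_outNbrs {K : Subgroup G} (hK : K < zpowers w) :
    Nat.card K ≤ (outNbrs w).ncard := by
  rw [← SetLike.coe_sort_coe, Nat.card_coe_set_eq]
  exact Set.ncard_le_ncard (fun c hc => lt_of_le_of_lt (zpowers_le.2 hc) hK) (Set.toFinite _)

lemma le_ncard_outNbrs_of_dvd {e : ℕ} (he : e ∣ orderOf w) (hlt : e < orderOf w) :
    e ≤ (outNbrs w).ncard := by
  have hord : orderOf (w ^ (orderOf w / e)) = e := orderOf_pow_orderOf_div (orderOf_pos w).ne' he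
  have hK : zpowers (w ^ (orderOf w / e)) < zpowers w :=
    lt_of_le_of_ne (zpowers_le.2 (npow_mem_zpowers w _)) fun h => by
      rw [← Nat.card_zpowers, h, Nat.card_zpowers] at hord
      exact hlt.ne' hord
  simpa only [Nat.card_zpowers, hord] using card_le_ncard_outNbrs hK

lemma outNbrs_subset_one_of_prime (hw : (orderOf w).Prime) : outNbrs w ⊆ {1} := by
  intro c (hc : zpowers c < zpowers w)
  rcases hw.eq_one_or_self_of_dvd _ (orderOf_dvd_of_mem_zpowers (zpowers_le.1 hc.le)) with h | h
  · exact orderOf_eq_one_iff.1 h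
  · exact absurd (eq_of_le_of_card_ge hc.le (by rw [Nat.card_zpowers, Nat.card_zpowers, h]))
      hc.ne

lemma orderOf_le_ncard_outNbrs_sq (h : 1 < (outNbrs w).ncard) :
    orderOf w ≤ (outNbrs w).ncard ^ 2 := by
  set m := orderOf w
  have hm : m ≠ 1 := fun hm => by simp [outNbrs_eq_empty_iff.2 (orderOf_eq_one_iff.1 hm)] at h
  have hq := Nat.minFac_prime hm
  have hqm : m.minFac < m := by
    refine lt_of_le_of_ne (Nat.minFac_le (orderOf_pos w)) fun hqm => ?_
    have := Set.ncard_le_ncard (outNbrs_subset_one_of_prime (hqm ▸ hq))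
    simp only [Set.ncard_singleton] at this
    omega
  have hdiv : m / m.minFac < m := Nat.div_lt_self (orderOf_pos w) hq.one_lt
  calc m = m.minFac * (m / m.minFac) := (Nat.mul_div_cancel' (Nat.minFac_dvd _)).symm
    _ ≤ (outNbrs w).ncard * (outNbrs w).ncard :=
      Nat.mul_le_mul (le_ncard_outNbrs_of_dvd (Nat.minFac_dvd _) hqm)
        (le_ncard_outNbrs_of_dvd (Nat.div_dvd_of_dvd (Nat.minFac_dvd _)) hdiv)
    _ = _ := (sq _).symm

lemma pow_mem_outNbrs {q : ℕ} (hqm : q ∣ orderOf a) (hq1 : q ≠ 1) : a ^ q ∈ outNbrs a := by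
  have hm0 : orderOf a ≠ 0 := (orderOf_pos a).ne'
  refine lt_of_le_of_ne (zpowers_le.2 (npow_mem_zpowers a q)) fun h => hq1 ?_
  have hcard := congrArg (fun K : Subgroup G => Nat.card K) h
  rw [Nat.card_zpowers, Nat.card_zpowers, orderOf_pow_of_dvd (ne_zero_of_dvd_ne_zero hm0 hqm) hqm,
    Nat.div_eq_self] at hcard
  exact hcard.resolve_left hm0

lemma eq_minFac_of_coe_eq_outNbrs {H : Subgroup G} (hH : (H : Set G) = outNbrs a) {q : ℕ}
    (hq : q.Prime) (hqm : q ∣ orderOf a) : q = (orderOf a).minFac := by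
  have hm1 : orderOf a ≠ 1 := fun h => hq.ne_one (Nat.dvd_one.1 (h ▸ hqm))
  have hp := Nat.minFac_prime hm1
  have hmem : ∀ r, r ∣ orderOf a → r ≠ 1 → a ^ r ∈ H := fun r hr hr1 => by
    rw [← SetLike.mem_coe, hH]
    exact pow_mem_outNbrs hr hr1
  by_contra hne
  -- Bézout recovers `a` from `a ^ q` and `a ^ p`, but `a ∉ outNbrs a`.
  obtain ⟨u, v, huv⟩ := Nat.isCoprime_iff_coprime.2 ((Nat.coprime_primes hq hp).2 hne)
  have hbezout : a = (a ^ q) ^ u * (a ^ (orderOf a).minFac) ^ v := by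
    rw [← zpow_natCast a q, ← zpow_natCast a (orderOf a).minFac, ← zpow_mul, ← zpow_mul,
      ← zpow_add, mul_comm (q : ℤ), mul_comm ((orderOf a).minFac : ℤ), huv, zpow_one]
  have haH : a ∈ H := hbezout ▸ H.mul_mem (H.zpow_mem (hmem q hqm hq.ne_one) u)
    (H.zpow_mem (hmem _ (Nat.minFac_dvd _) hp.ne_one) v)
  exact lt_irrefl (zpowers a) (show a ∈ outNbrs a from hH ▸ haH)

lemma exists_prime_pow_of_coe_eq_outNbrs {H : Subgroup G} (hH : (H : Set G) = outNbrs a) :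
    ∃ p i, p.Prime ∧ orderOf a = p ^ (i + 1) ∧
      ((zpowers (a ^ p) : Subgroup G) : Set G) = outNbrs a ∧ (outNbrs a).ncard = p ^ i := by
  have ha : a ∉ H := fun h => lt_irrefl (zpowers a) (show a ∈ outNbrs a from hH ▸ h)
  have hHa : H ≤ zpowers a := fun c hc => by
    rw [← SetLike.mem_coe, hH] at hc
    exact zpowers_le.1 (show zpowers c < zpowers a from hc).le
  have hm1 : orderOf a ≠ 1 := fun h => by
    have h1 : (1 : G) ∈ outNbrs a := hH ▸ H.one_mem
    simp [outNbrs_eq_empty_iff.2 (orderOf_eq_one_iff.1 h)] at h1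
  set p := (orderOf a).minFac
  have hp : p.Prime := Nat.minFac_prime hm1
  have hmp : orderOf a = p ^ (orderOf a).primeFactorsList.length :=
    Nat.eq_prime_pow_of_unique_prime_dvd (orderOf_pos a).ne' (eq_minFac_of_coe_eq_outNbrs hH)
  obtain ⟨i, hi⟩ : ∃ i, (orderOf a).primeFactorsList.length = i + 1 :=
    Nat.exists_eq_succ_of_ne_zero fun h => hm1 (by rw [hmp, h, pow_zero])
  rw [hi] at hmp
  have hord : orderOf (a ^ p) = p ^ i := by
    rw [orderOf_pow_of_dvd hp.ne_zero (Nat.minFac_dvd _), hmp, pow_succ,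
      Nat.mul_div_cancel _ hp.pos]
  have hpH : a ^ p ∈ H := by
    rw [← SetLike.mem_coe, hH]
    exact pow_mem_outNbrs (Nat.minFac_dvd _) hp.ne_one
  have hHeq : zpowers (a ^ p) = H := by
    refine eq_of_le_of_card_ge (zpowers_le.2 hpH) ?_
    have hdvd : Nat.card H ∣ p ^ (i + 1) := by
      simpa only [Nat.card_zpowers, ← hmp] using card_dvd_of_le hHa
    obtain ⟨t, ht, hcard⟩ := (Nat.dvd_prime_pow hp).1 hdvd
    rw [hcard, Nat.card_zpowers, hord]
    refine Nat.pow_le_pow_right hp.pos (Nat.le_of_lt_succ (lt_of_le_of_ne ht fun h => ha ?_))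
    rw [eq_of_le_of_card_ge hHa (by rw [hcard, h, Nat.card_zpowers, hmp])]
    exact mem_zpowers a
  refine ⟨p, i, hp, hmp, by rw [hHeq, hH], ?_⟩
  rw [← hH, ← hHeq, ncard_coe_zpowers, hord]

lemma orderOf_eq_of_coe_eq_outNbrs {H K : Subgroup G} (hH : (H : Set G) = outNbrs a)
    (hK : (K : Set G) = outNbrs b) (hcard : (outNbrs a).ncard = (outNbrs b).ncard)
    (h1 : 1 < (outNbrs a).ncard) : orderOf a = orderOf b := by
  obtain ⟨p, i, hp, ha, -, hi⟩ := exists_prime_pow_of_coe_eq_outNbrs hH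
  obtain ⟨q, j, hq, hb, -, hj⟩ := exists_prime_pow_of_coe_eq_outNbrs hK
  have hi0 : i ≠ 0 := by rintro rfl; simp [hi] at h1
  have hj0 : j ≠ 0 := by rintro rfl; simp [hcard, hj] at h1
  obtain ⟨rfl, rfl⟩ := hp.pow_inj' hq hi0 hj0 (hi.symm.trans (hcard.trans hj))
  rw [ha, hb]

lemma ncard_outNbrs_le_one_of_outNbrs_eq (ha : a ∈ zpowers w) (hb : b ∈ zpowers w)
    (h : outNbrs a = outNbrs b) (hne : zpowers a ≠ zpowers b) : (outNbrs a).ncard ≤ 1 := by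
  by_contra! h1
  have hI := coe_zpowers_inf_eq_outNbrs h hne
  exact hne (zpowers_eq_of_orderOf_eq ha hb
    (orderOf_eq_of_coe_eq_outNbrs hI (hI.trans h) (congrArg _ h) h1))

lemma eq_one_or_one_lt_ncard_of_coe_eq_outNbrs {H : Subgroup G} (hH : (H : Set G) = outNbrs a) :
    outNbrs a = {1} ∨ 1 < (outNbrs a).ncard := by
  rcases eq_or_ne H ⊥ with rfl | hbot
  · exact Or.inl (by rw [← hH, coe_bot])
  · refine Or.inr ?_
    rw [← hH, ← Nat.card_coe_set_eq, SetLike.coe_sort_coe]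
    exact (one_lt_card_iff_ne_bot H).2 hbot

end Finite

section Automorphisms

variable [Finite G] {π : Equiv.Perm G} {x : G}

/-- If `outNbrs x` is a nontrivial subgroup, it is the cyclic `p`-group `⟨g⟩`, `g = x ^ p`, so
each of its elements lies strictly below `g` or has the same out-neighbourhood as `g`, and `π`
carries this over to `outNbrs (π x)` and `π g`. If all elements of the second kind generate
`⟨π g⟩`, then `outNbrs (π x) = ⟨π g⟩` and the orders agree; otherwise `outNbrs (π g)` has at most
one element, which forces `o(g) = p` and `o(π x) ≤ |outNbrs (π x)| ^ 2 = p ^ 2`. -/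
theorem DRPAut.orderOf_apply_le (hπ : π ∈ DRPAut G) {H : Subgroup G}
    (hH : (H : Set G) = outNbrs x) (h1 : 1 < (outNbrs x).ncard) :
    orderOf (π x) ≤ orderOf x := by
  obtain ⟨p, i, hp, hx, hg, hd⟩ := exists_prime_pow_of_coe_eq_outNbrs hH
  set g := x ^ p
  have hgw : π g ∈ outNbrs (π x) := by
    rw [outNbrs_apply hπ, ← hg]
    exact Set.mem_image_of_mem π (mem_zpowers g)
  have hchain : ∀ v ∈ outNbrs (π x), v ∈ outNbrs (π g) ∨ outNbrs v = outNbrs (π g) := by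
    rw [outNbrs_apply hπ, ← hg]
    rintro _ ⟨u, hu, rfl⟩
    rcases (zpowers_le.2 hu).lt_or_eq with hlt | heq
    · exact Or.inl ((zpowers_lt_iff hπ u g).2 hlt)
    · exact Or.inr (by rw [outNbrs_apply hπ, outNbrs_apply hπ, outNbrs_congr heq])
  have hmem : ∀ v ∈ outNbrs (π x), v ∈ zpowers (π x) := fun v hv =>
    zpowers_le.1 (show zpowers v < zpowers (π x) from hv).le
  by_cases htwin : ∃ v ∈ outNbrs (π x), outNbrs v = outNbrs (π g) ∧ zpowers v ≠ zpowers (π g)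
  · obtain ⟨v, hv, hvg, hne⟩ := htwin
    have hg1 : (outNbrs g).ncard ≤ 1 := by
      rw [← ncard_outNbrs_apply hπ, ← hvg]
      exact ncard_outNbrs_le_one_of_outNbrs_eq (hmem v hv) (hmem _ hgw) hvg hne
    have hog : orderOf g = p ^ i := by rw [← ncard_coe_zpowers, hg, hd]
    have hi0 : i ≠ 0 := by rintro rfl; simp [hd] at h1
    have hi : i = 1 := by
      by_contra hi1
      have hpg := le_ncard_outNbrs_of_dvd (w := g) (e := p) (hog ▸ dvd_pow_self p hi0)
        (hog ▸ lt_self_pow₀ hp.one_lt (by omega))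
      have := hp.two_le
      omega
    calc orderOf (π x) ≤ (outNbrs (π x)).ncard ^ 2 :=
          orderOf_le_ncard_outNbrs_sq (by rwa [ncard_outNbrs_apply hπ])
      _ = orderOf x := by rw [ncard_outNbrs_apply hπ, hd, hx, hi]; ring
  · push Not at htwin
    have hsub : ((zpowers (π g) : Subgroup G) : Set G) = outNbrs (π x) := by
      refine Set.Subset.antisymm (fun c hc => lt_of_le_of_lt (zpowers_le.2 hc) hgw) fun v hv => ?_
      rcases hchain v hv with hlt | heq
      · exact zpowers_le.1 (show zpowers v < zpowers (π g) from hlt).le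
      · exact zpowers_le.1 (htwin v hv heq).le
    exact (orderOf_eq_of_coe_eq_outNbrs hsub hH (ncard_outNbrs_apply hπ x)
      (by rwa [ncard_outNbrs_apply hπ])).le

lemma TypeII.orderOf_lt_apply (hπ : π ∈ DRPAut G) (hT : TypeII G x)
    (hsingle : ∀ v, simEq G v (π x) → zpowers v = zpowers (π x)) :
    orderOf x < orderOf (π x) := by
  obtain ⟨⟨y, z, hy, hz, hyz⟩, hmax⟩ := hT
  have hx := (hmax x (simEq_refl x)).1
  have hord : ∀ {u}, simEq G u x → orderOf x = (outNbrs x).ncard + (genCls G u).ncard := by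
    intro u hu
    rw [← (simEq_iff_outNbrs_eq (hmax u hu).1 hx).1 hu, ← (hmax u hu).2,
      orderOf_eq_ncard_outNbrs_add_ncard_genCls]
  have hgen : genCls G y ∪ genCls G z ⊆ hatCls G x := by
    rintro c (hc | hc)
    · exact (simEq_of_zpowers_eq hc).trans hy
    · exact (simEq_of_zpowers_eq hc).trans hz
  have hdisj : Disjoint (genCls G y) (genCls G z) :=
    Set.disjoint_left.2 fun c hcy hcz => hyz ((show zpowers c = zpowers y from hcy).symm.trans hcz)
  have himage : π '' hatCls G x ⊆ genCls G (π x) := by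
    rintro _ ⟨u, hu, rfl⟩
    exact hsingle _ ((DRPAut.simEq_apply_iff hπ u x).2 hu)
  have hle : (genCls G y).ncard + (genCls G z).ncard ≤ (genCls G (π x)).ncard := calc
    _ = (genCls G y ∪ genCls G z).ncard := (Set.ncard_union_eq hdisj).symm
    _ ≤ (hatCls G x).ncard := Set.ncard_le_ncard hgen
    _ = (π '' hatCls G x).ncard := (Set.ncard_image_of_injective _ π.injective).symm
    _ ≤ _ := Set.ncard_le_ncard himage
  have hpos : 0 < (genCls G y).ncard := (Set.ncard_pos (Set.toFinite _)).2 ⟨y, rfl⟩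
  have hw := orderOf_eq_ncard_outNbrs_add_ncard_genCls (π x)
  rw [DRPAut.ncard_outNbrs_apply hπ] at hw
  have := hord hy
  have := hord hz
  omega

lemma TypeII.exists_simEq_apply_ne (hπ : π ∈ DRPAut G) (hT : TypeII G x) :
    ∃ y z, simEq G y (π x) ∧ simEq G z (π x) ∧ zpowers y ≠ zpowers z := by
  by_contra! hsingle
  obtain ⟨H, hH⟩ := exists_coe_eq_outNbrs_of_simEq (fun v hv => (hT.2 v hv).1) hT.1
  rcases eq_one_or_one_lt_ncard_of_coe_eq_outNbrs hH with h1 | h1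
  · obtain ⟨y, z, hy, hz, hyz⟩ := hT.1
    have hxx := DRPAut.simEq_apply_of_outNbrs_eq_one hπ (hT.2 x (simEq_refl x)).1 h1
    exact hyz (hsingle y z (hy.trans hxx.symm) (hz.trans hxx.symm))
  · exact (DRPAut.orderOf_apply_le hπ hH h1).not_gt
      (hT.orderOf_lt_apply hπ fun v hv => hsingle v (π x) hv (simEq_refl _))

lemma TypeII.orderOf_apply (hπ : π ∈ DRPAut G) (hT : TypeII G x) :
    orderOf (π x) = orderOf x := by
  obtain ⟨H, hH⟩ := exists_coe_eq_outNbrs_of_simEq (fun v hv => (hT.2 v hv).1) hT.1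
  rcases eq_one_or_one_lt_ncard_of_coe_eq_outNbrs hH with h1 | h1
  · exact (hT.2 _ (DRPAut.simEq_apply_of_outNbrs_eq_one hπ (hT.2 x (simEq_refl x)).1 h1)).2
  · obtain ⟨K, hK⟩ := exists_coe_eq_outNbrs_of_simEq (fun v => hT.isMaxCyc_of_simEq_apply hπ)
      (hT.exists_simEq_apply_ne hπ)
    exact orderOf_eq_of_coe_eq_outNbrs hK hH (DRPAut.ncard_outNbrs_apply hπ x)
      (by rwa [DRPAut.ncard_outNbrs_apply hπ])

end Automorphisms

/-- if `x̂` is of Type II and `π` is an automorphism of `→RP(G)`, then the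
`≃`-class of `x^π` is also of Type II and `o(x^π) = o(x)`. -/
theorem aut_DRP_typeII {G : Type*} [Group G] [Fintype G]
    (π : Equiv.Perm G) (hπ : π ∈ DRPAut G) (x : G) (hT : TypeII G x) :
    TypeII G (π x) ∧ orderOf (π x) = orderOf x := by
  refine ⟨⟨hT.exists_simEq_apply_ne hπ, fun v hv => ⟨hT.isMaxCyc_of_simEq_apply hπ hv, ?_⟩⟩,
    hT.orderOf_apply hπ⟩
  obtain ⟨u, rfl⟩ := π.surjective v
  have hu : simEq G u x := (DRPAut.simEq_apply_iff hπ u x).1 hv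
  rw [(hT.of_simEq hu).orderOf_apply hπ, (hT.2 u hu).2, hT.orderOf_apply hπ]
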